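/- arXiv:math/0509091 — 2 statements merged into one kernel-verified Lean document; each statement's English description precedes it below -/
import Mathlib

section
/- Let n ≥ 1 and let g be an element of the unitary group U(n+1). If the intersection ℝPⁿ ∩ g·ℝPⁿ of the standard real projective subspace of ℂPⁿ with its image under g is a finite set, then it contains at least n+1 points. -/
/-- The standard real projective subspace `ℝPⁿ ⊂ ℂPⁿ`: the set of points of
`ℙ(ℂ^{n+1})` admitting a nonzero representative vector with real coordinates. -/
def realProjSet (n : ℕ) : Set (Projectivization ℂ (Fin (n + 1) → ℂ)) :=
  {p | ∃ (v : Fin (n + 1) → ℝ) (hv : (fun i => (v i : ℂ)) ≠ 0),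
    p = Projectivization.mk ℂ (fun i => (v i : ℂ)) hv}

/-- The image `g·ℝPⁿ ⊂ ℂPⁿ` of the standard real projective subspace under
`g ∈ U(n+1)`, acting on `ℙ(ℂ^{n+1})` through the linear action on `ℂ^{n+1}`. -/
def unitaryRealProjSet (n : ℕ) (g : Matrix.unitaryGroup (Fin (n + 1)) ℂ) :
    Set (Projectivization ℂ (Fin (n + 1) → ℂ)) :=
  {p | ∃ (v : Fin (n + 1) → ℝ)
      (hv : Matrix.mulVec (g : Matrix (Fin (n + 1)) (Fin (n + 1)) ℂ)
        (fun i => (v i : ℂ)) ≠ 0),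
    p = Projectivization.mk ℂ
      (Matrix.mulVec (g : Matrix (Fin (n + 1)) (Fin (n + 1)) ℂ) (fun i => (v i : ℂ))) hv}

/-! For `g ∈ U(n+1)` the matrix `A = g gᵀ` is unitary and symmetric, so its real and imaginary
parts are commuting real symmetric matrices and have a common real eigenbasis `v₀, …, vₙ`. If
`A v = λ v` with `v` real, then `u = g⁻¹ v` satisfies `ū = gᵀ v = λ u`; hence some nonzero
multiple `μ u` is real, and `[v] = [g (μ u)]` lies in `ℝPⁿ ∩ g·ℝPⁿ`. Real vectors that are not
real-proportional span distinct complex lines, so the `[vₖ]` are `n + 1` distinct points. -/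

open Matrix Module.End

variable {ι : Type*}

theorem exists_smul_star_eq_self_of_star_eq_smul {u : ι → ℂ} (hu : u ≠ 0) {l : ℂ}
    (h : star u = l • u) : ∃ μ : ℂ, μ ≠ 0 ∧ star (μ • u) = μ • u := by
  have hl : star l * l = 1 := by
    have : (star l * l - 1) • u = 0 := by
      rw [sub_smul, one_smul, mul_smul, ← h, ← star_smul, ← h, star_star, sub_self]
    simpa [sub_eq_zero, hu] using this
  by_cases hl1 : l = -1
  · refine ⟨Complex.I, Complex.I_ne_zero, ?_⟩
    rw [star_smul, h, hl1, smul_smul]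
    simp
  · refine ⟨1 + l, fun h0 => hl1 (by linear_combination h0), ?_⟩
    rw [star_smul, h, smul_smul, star_add, star_one, add_mul, hl, one_mul, add_comm]

theorem ofReal_re_eq_of_star_eq {w : ι → ℂ} (hw : star w = w) :
    (fun i => ((w i).re : ℂ)) = w :=
  funext fun i => Complex.conj_eq_iff_re.mp (congrFun hw i)

theorem Matrix.mulVec_ofReal_eq_smul [Fintype ι] {A : Matrix ι ι ℂ} {v : ι → ℝ} {α β : ℝ}
    (hre : A.map Complex.re *ᵥ v = α • v) (him : A.map Complex.im *ᵥ v = β • v) :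
    A *ᵥ (fun i => (v i : ℂ)) = (⟨α, β⟩ : ℂ) • fun i => (v i : ℂ) := by
  funext i
  have hre := congrFun hre i
  have him := congrFun him i
  simp only [mulVec, dotProduct, map_apply, Pi.smul_apply, smul_eq_mul] at hre him ⊢
  apply Complex.ext <;> simp [Complex.re_sum, Complex.im_sum, hre, him]

theorem Matrix.IsSymm.commute_map_re_map_im [Fintype ι] [DecidableEq ι] {A : Matrix ι ι ℂ}
    (hA : A.IsSymm) (hU : Aᴴ * A = 1) : Commute (A.map Complex.re) (A.map Complex.im) := by
  ext i j
  have h1 : ((1 : Matrix ι ι ℂ) i j).im = 0 := by rw [one_apply]; split_ifs <;> simp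
  have him := congrArg Complex.im (congrFun (congrFun hU i) j)
  simp only [mul_apply, conjTranspose_apply, Complex.im_sum, Complex.mul_im, Complex.star_def,
    Complex.conj_re, Complex.conj_im, hA.apply i, h1] at him
  simp only [mul_apply, map_apply]
  rw [← sub_eq_zero, ← Finset.sum_sub_distrib, ← him]
  exact Finset.sum_congr rfl fun _ _ => by ring

theorem Matrix.exists_basis_common_eigenvectors_of_commute {𝕜 : Type*} [RCLike 𝕜] [Fintype ι]
    [DecidableEq ι] {P Q : Matrix ι ι 𝕜} (hP : P.IsHermitian) (hQ : Q.IsHermitian)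
    (hPQ : Commute P Q) :
    ∃ b : Module.Basis ι 𝕜 (ι → 𝕜), ∀ k, ∃ α β : 𝕜, P *ᵥ b k = α • b k ∧ Q *ᵥ b k = β • b k := by
  have hinternal := LinearMap.IsSymmetric.directSum_isInternal_of_commute
    (isSymmetric_toEuclideanLin_iff.mpr hP) (isSymmetric_toEuclideanLin_iff.mpr hQ)
    (by rw [Commute, SemiconjBy, Module.End.mul_eq_comp, Module.End.mul_eq_comp,
      ← toLpLin_mul_same, ← toLpLin_mul_same, hPQ.eq])
  let C := hinternal.collectedBasis fun _ => Module.Free.chooseBasis 𝕜 _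
  let e := (C.map (WithLp.linearEquiv 2 𝕜 (ι → 𝕜))).indexEquiv (Pi.basisFun 𝕜 ι)
  refine ⟨(C.map (WithLp.linearEquiv 2 𝕜 (ι → 𝕜))).reindex e, fun k => ?_⟩
  obtain ⟨hα, hβ⟩ := hinternal.collectedBasis_mem (fun _ => Module.Free.chooseBasis 𝕜 _) (e.symm k)
  refine ⟨(e.symm k).1.2, (e.symm k).1.1, ?_, ?_⟩
  · simpa [C] using congrArg WithLp.ofLp (mem_eigenspace_iff.mp hα)
  · simpa [C] using congrArg WithLp.ofLp (mem_eigenspace_iff.mp hβ)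

theorem Projectivization.exists_smul_eq_of_mk_ofReal_eq {x y : ι → ℝ}
    {hx : (fun i => (x i : ℂ)) ≠ 0} {hy : (fun i => (y i : ℂ)) ≠ 0}
    (h : Projectivization.mk ℂ _ hx = Projectivization.mk ℂ _ hy) : ∃ c : ℝ, c • y = x := by
  obtain ⟨a, ha⟩ := (Projectivization.mk_eq_mk_iff ℂ _ _ hx hy).mp h
  exact ⟨(a : ℂ).re, funext fun k => by
    simpa [Units.smul_def] using congrArg Complex.re (congrFun ha k)⟩

theorem mk_mem_unitaryRealProjSet_of_mulVec_eq_smul {n : ℕ}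
    (g : Matrix.unitaryGroup (Fin (n + 1)) ℂ) {v : Fin (n + 1) → ℝ}
    (hv : (fun i => (v i : ℂ)) ≠ 0) {l : ℂ}
    (hl : ((g : Matrix _ _ ℂ) * (g : Matrix _ _ ℂ)ᵀ) *ᵥ (fun i => (v i : ℂ)) =
      l • fun i => (v i : ℂ)) :
    Projectivization.mk ℂ _ hv ∈ unitaryRealProjSet n g := by
  set G : Matrix (Fin (n + 1)) (Fin (n + 1)) ℂ := ↑g
  set x : Fin (n + 1) → ℂ := fun i => (v i : ℂ)
  have hGG : G * star G = 1 := Unitary.mul_star_self_of_mem g.2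
  have hGx : G *ᵥ (star G *ᵥ x) = x := by rw [mulVec_mulVec, hGG, one_mulVec]
  have hu : star G *ᵥ x ≠ 0 := fun h => hv (by rw [← hGx, h, mulVec_zero])
  have hstar : star (star G *ᵥ x) = l • (star G *ᵥ x) := by
    have hx : star x = x := funext fun i => by simp [x]
    calc star (star G *ᵥ x) = Gᵀ *ᵥ x := by
          rw [star_mulVec, hx, star_eq_conjTranspose, conjTranspose_conjTranspose,
            mulVec_transpose]
      _ = star G *ᵥ ((G * Gᵀ) *ᵥ x) := by
          rw [mulVec_mulVec, ← Matrix.mul_assoc, Unitary.star_mul_self_of_mem g.2,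
            Matrix.one_mul]
      _ = l • (star G *ᵥ x) := by rw [hl, mulVec_smul]
  obtain ⟨μ, hμ, hreal⟩ := exists_smul_star_eq_self_of_star_eq_smul hu hstar
  have hGw : G *ᵥ (μ • (star G *ᵥ x)) = μ • x := by rw [mulVec_smul, hGx]
  refine ⟨fun i => ((μ • (star G *ᵥ x)) i).re, ?_, ?_⟩
  · rw [ofReal_re_eq_of_star_eq hreal, hGw]
    exact smul_ne_zero hμ hv
  · rw [Projectivization.mk_eq_mk_iff']
    refine ⟨μ⁻¹, ?_⟩
    change μ⁻¹ • (G *ᵥ fun i => (((μ • (star G *ᵥ x)) i).re : ℂ)) = x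
    rw [ofReal_re_eq_of_star_eq hreal, hGw, inv_smul_smul₀ hμ]

theorem givental_unitary_intersection_general (n : ℕ)
    (g : Matrix.unitaryGroup (Fin (n + 1)) ℂ)
    (hfin : (realProjSet n ∩ unitaryRealProjSet n g).Finite) :
    n + 1 ≤ (realProjSet n ∩ unitaryRealProjSet n g).ncard := by
  set A : Matrix (Fin (n + 1)) (Fin (n + 1)) ℂ := (g : Matrix _ _ ℂ) * (g : Matrix _ _ ℂ)ᵀ
  have hsymm : A.IsSymm := by simp [A, IsSymm, transpose_mul]
  have hunit : Aᴴ * A = 1 :=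
    mem_unitaryGroup_iff'.mp (mul_mem g.2 (transpose_mem_unitaryGroup_iff.mpr g.2))
  obtain ⟨b, hb⟩ := exists_basis_common_eigenvectors_of_commute
    (isHermitian_iff_isSymm.mpr (hsymm.map _)) (isHermitian_iff_isSymm.mpr (hsymm.map _))
    (hsymm.commute_map_re_map_im hunit)
  have hb0 (k : Fin (n + 1)) : (fun i => (b k i : ℂ)) ≠ 0 := fun h =>
    b.ne_zero k (funext fun i => by simpa using congrFun h i)
  let p (k : Fin (n + 1)) : Projectivization ℂ (Fin (n + 1) → ℂ) :=
    Projectivization.mk ℂ _ (hb0 k)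
  have hp : Set.range p ⊆ realProjSet n ∩ unitaryRealProjSet n g := by
    rintro _ ⟨k, rfl⟩
    obtain ⟨α, β, hα, hβ⟩ := hb k
    exact ⟨⟨b k, hb0 k, rfl⟩, mk_mem_unitaryRealProjSet_of_mulVec_eq_smul g (hb0 k)
      (mulVec_ofReal_eq_smul hα hβ)⟩
  have hinj : p.Injective := fun k l hkl => by
    obtain ⟨c, hc⟩ := Projectivization.exists_smul_eq_of_mk_ofReal_eq hkl
    exact b.linearIndependent.eq_of_smul_apply_eq_smul_apply 1 c k l one_ne_zero
      (by rw [one_smul, hc])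
  calc n + 1 = (Set.range p).ncard := by rw [Set.ncard_range_of_injective hinj, Nat.card_fin]
    _ ≤ _ := Set.ncard_le_ncard hp hfin

/-- Givental's theorem for unitary translates: if `ℝPⁿ ∩ g·ℝPⁿ` is finite,
it has at least `n + 1` points. -/
theorem givental_unitary_intersection (n : ℕ) (hn : 1 ≤ n)
    (g : Matrix.unitaryGroup (Fin (n + 1)) ℂ)
    (hfin : (realProjSet n ∩ unitaryRealProjSet n g).Finite) :
    n + 1 ≤ (realProjSet n ∩ unitaryRealProjSet n g).ncard :=
  givental_unitary_intersection_general n g hfin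
end

section
/- Let n ≥ 1. The set of elements g of the unitary group U(n+1) for which the intersection ℝPⁿ ∩ g·ℝPⁿ in ℂPⁿ is a finite set is an open subset of U(n+1). -/
/-!
Write `S = g gᵀ`, a symmetric unitary matrix. A real point `[u]` lies on `g·ℝPⁿ` iff `u` is an
eigenvector of `S`, so `ℝPⁿ ∩ g·ℝPⁿ` is the union of the real points of the projectivized
eigenspaces of `S`. These eigenspaces are stable under complex conjugation (as `S̄ = S⁻¹`), hence
spanned by real vectors: the intersection is finite iff every eigenspace has dimension at most
one. The eigenvalues lie on the unit circle, and `dim ker (A - ν) ≤ 1` is an open condition on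
`(A, ν)` by lower semicontinuity of the rank, so compactness of the circle gives openness in `g`.
-/

open Matrix Module
open scoped ComplexOrder

section complexify

variable {m : Type*}

def complexify (v : m → ℝ) : m → ℂ := fun i => (v i : ℂ)

@[simp]
lemma complexify_apply (v : m → ℝ) (i : m) : complexify v i = v i := rfl

lemma star_complexify (v : m → ℝ) : star (complexify v) = complexify v := by
  ext i
  simp

lemma complexify_add_smul (a b : m → ℝ) (t : ℝ) :
    complexify (a + t • b) = complexify a + (t : ℂ) • complexify b := by
  ext i
  simp

lemma exists_complexify_eq_of_star_eq {x : m → ℂ} (hx : star x = x) :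
    ∃ v : m → ℝ, complexify v = x :=
  ⟨fun i => (x i).re, funext fun i => Complex.conj_eq_iff_re.mp (congrFun hx i)⟩

end complexify

lemma Complex.exists_ne_zero_star_mul_eq_self {ν : ℂ} (hν : ‖ν‖ = 1) :
    ∃ c : ℂ, c ≠ 0 ∧ star c * ν = c := by
  by_cases hν1 : ν = -1
  · exact ⟨Complex.I, Complex.I_ne_zero, by simp [hν1]⟩
  · refine ⟨1 + ν, fun h => hν1 (by linear_combination h), ?_⟩
    rw [star_add, star_one, add_mul, one_mul, Complex.star_def, Complex.conj_mul', hν,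
      Complex.ofReal_one, one_pow, add_comm]

namespace Projectivization

variable {K V : Type*} [Field K] [AddCommGroup V] [Module K V]

lemma mk_eq_mk_of_finrank_le_one [FiniteDimensional K V] {W : Submodule K V}
    (hW : finrank K W ≤ 1) {v w : V} (hv : v ≠ 0) (hw : w ≠ 0) (hvW : v ∈ W) (hwW : w ∈ W) :
    mk K v hv = mk K w hw := by
  obtain ⟨e, he⟩ := finrank_le_one_iff.mp hW
  obtain ⟨a, ha⟩ := he ⟨v, hvW⟩
  obtain ⟨b, hb⟩ := he ⟨w, hwW⟩
  have hv' : a • (e : V) = v := congrArg Subtype.val ha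
  have hw' : b • (e : V) = w := congrArg Subtype.val hb
  have hb0 : b ≠ 0 := by rintro rfl; exact hw (by rw [← hw', zero_smul])
  refine (mk_eq_mk_iff' K v w hv hw).mpr ⟨a / b, ?_⟩
  rw [← hv', ← hw', smul_smul, div_mul_cancel₀ a hb0]

lemma add_smul_ne_zero_of_linearIndependent {a b : V} (hab : LinearIndependent K ![a, b])
    (t : K) : a + t • b ≠ 0 := fun h =>
  one_ne_zero (LinearIndependent.pair_iff.mp hab 1 t (by rwa [one_smul])).1

lemma mk_add_smul_injective {a b : V} (hab : LinearIndependent K ![a, b]) :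
    Function.Injective fun t : K =>
      mk K (a + t • b) (add_smul_ne_zero_of_linearIndependent hab t) := by
  intro t t' h
  obtain ⟨c, hc⟩ := (mk_eq_mk_iff' K _ _ _ _).mp h
  have hzero : (c - 1) • a + (c * t' - t) • b = 0 := by
    rw [← sub_eq_zero.mpr hc]; module
  obtain ⟨hc1, ht⟩ := LinearIndependent.pair_iff.mp hab _ _ hzero
  rw [sub_eq_zero.mp hc1, one_mul, sub_eq_zero] at ht
  exact ht.symm

end Projectivization

namespace Matrix

lemma star_mulVec_eq_mulVec_star {m : Type*} [Fintype m] (A : Matrix m m ℂ) (x : m → ℂ) :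
    star (A *ᵥ x) = Aᴴᵀ *ᵥ star x := by
  rw [star_mulVec, mulVec_transpose]

variable {m : Type*} [Fintype m] [DecidableEq m]

lemma norm_eq_one_of_mulVec_eq_smul {U : Matrix m m ℂ} (hU : U ∈ unitaryGroup m ℂ)
    {x : m → ℂ} {ν : ℂ} (hx : U *ᵥ x = ν • x) (hx0 : x ≠ 0) : ‖ν‖ = 1 := by
  have hnorm : (‖ν‖ ^ 2 : ℂ) * (star x ⬝ᵥ x) = 1 * (star x ⬝ᵥ x) := by
    calc (‖ν‖ ^ 2 : ℂ) * (star x ⬝ᵥ x) = star (U *ᵥ x) ⬝ᵥ (U *ᵥ x) := by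
          rw [hx, star_smul, smul_dotProduct, dotProduct_smul, smul_eq_mul, smul_eq_mul,
            ← mul_assoc, ← Complex.conj_mul']
          rfl
      _ = 1 * (star x ⬝ᵥ x) := by
          rw [star_mulVec, dotProduct_mulVec, vecMul_vecMul, ← star_eq_conjTranspose,
            (mem_unitaryGroup_iff'.mp hU), vecMul_one, one_mul]
  have hsq := mul_right_cancel₀ (dotProduct_star_self_eq_zero.not.mpr hx0) hnorm
  exact (pow_eq_one_iff_of_nonneg (norm_nonneg ν) two_ne_zero).mp (by exact_mod_cast hsq)

lemma star_mem_eigenspace_of_transpose_eq {S : Matrix m m ℂ} (hS : S ∈ unitaryGroup m ℂ)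
    (hST : Sᵀ = S) {ν : ℂ} {x : m → ℂ} (hx : x ∈ End.eigenspace (toLin' S) ν) :
    star x ∈ End.eigenspace (toLin' S) ν := by
  rw [End.mem_eigenspace_iff, toLin'_apply] at hx ⊢
  rcases eq_or_ne x 0 with rfl | hx0
  · simp
  have hν : ν * star ν = 1 := by
    rw [Complex.star_def, Complex.mul_conj', norm_eq_one_of_mulVec_eq_smul hS hx hx0]
    norm_num
  -- `Sᴴ = S⁻¹` has eigenvalue `ν⁻¹ = star ν` on `x`, and conjugating turns `Sᴴ` into `Sᵀ = S`.
  have hSH : Sᴴ *ᵥ x = star ν • x := by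
    calc Sᴴ *ᵥ x = star ν • Sᴴ *ᵥ (ν • x) := by
          rw [mulVec_smul, smul_smul, mul_comm, hν, one_smul]
      _ = star ν • x := by
          rw [← hx, mulVec_mulVec, ← star_eq_conjTranspose, mem_unitaryGroup_iff'.mp hS,
            one_mulVec]
  have := congrArg star hSH
  rwa [star_mulVec_eq_mulVec_star, conjTranspose_conjTranspose, hST, star_smul, star_star] at this

lemma mul_transpose_mem_unitaryGroup {G : Matrix m m ℂ} (hG : G ∈ unitaryGroup m ℂ) :
    G * Gᵀ ∈ unitaryGroup m ℂ :=
  mul_mem hG (transpose_mem_unitaryGroup_iff.mpr hG)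

/-- A real line through `u` is the image of a real line under `G` iff `u` is an eigenvector of
`G Gᵀ`. -/
lemma exists_smul_mulVec_complexify_eq_iff {G : Matrix m m ℂ} (hG : G ∈ unitaryGroup m ℂ)
    {u : m → ℝ} (hu : complexify u ≠ 0) :
    (∃ (w : m → ℝ) (a : ℂ), a • (G *ᵥ complexify w) = complexify u) ↔
      ∃ ν, complexify u ∈ End.eigenspace (toLin' (G * Gᵀ)) ν := by
  have hGG : Gᴴ * G = 1 := star_eq_conjTranspose G ▸ mem_unitaryGroup_iff'.mp hG
  have hGG' : G * Gᴴ = 1 := star_eq_conjTranspose G ▸ mem_unitaryGroup_iff.mp hG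
  simp only [End.mem_eigenspace_iff, toLin'_apply]
  constructor
  · rintro ⟨w, a, hw⟩
    have ha : a ≠ 0 := by rintro rfl; exact hu (by rw [← hw, zero_smul])
    have hGT : Gᵀ *ᵥ complexify u = star a • complexify w := by
      rw [← star_complexify u, ← hw, star_smul, star_mulVec_eq_mulVec_star, mulVec_smul,
        mulVec_mulVec, ← transpose_mul, hGG, transpose_one, one_mulVec, star_complexify]
    refine ⟨star a * a⁻¹, ?_⟩
    rw [← mulVec_mulVec, hGT, mulVec_smul, ← hw, smul_smul, mul_assoc, inv_mul_cancel₀ ha,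
      mul_one]
  · rintro ⟨ν, hν⟩
    have hν1 : ‖ν‖ = 1 := norm_eq_one_of_mulVec_eq_smul (mul_transpose_mem_unitaryGroup hG) hν hu
    set w₀ := Gᴴ *ᵥ complexify u
    have hGT : Gᵀ *ᵥ complexify u = ν • w₀ := by
      rw [← one_mulVec (Gᵀ *ᵥ _), ← hGG, ← mulVec_mulVec, mulVec_mulVec _ G, hν, mulVec_smul]
    have hw₀ : star w₀ = ν • w₀ := by
      rw [star_mulVec_eq_mulVec_star, conjTranspose_conjTranspose, star_complexify, hGT]
    obtain ⟨c, hc0, hc⟩ := Complex.exists_ne_zero_star_mul_eq_self hν1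
    obtain ⟨w, hw⟩ := exists_complexify_eq_of_star_eq (x := c • w₀)
      (by rw [star_smul, hw₀, smul_smul, hc])
    refine ⟨w, c⁻¹, ?_⟩
    rw [hw, mulVec_smul, mulVec_mulVec, hGG', one_mulVec, smul_smul, inv_mul_cancel₀ hc0,
      one_smul]

end Matrix

namespace Matrix

variable {𝕜 : Type*} [NontriviallyNormedField 𝕜] [CompleteSpace 𝕜]
  {m n : Type*} [Fintype m] [Fintype n] [DecidableEq n]

theorem isOpen_setOf_finrank_ker_toLin'_le (k : ℕ) :
    IsOpen {A : Matrix m n 𝕜 | finrank 𝕜 (LinearMap.ker (toLin' A)) ≤ k} := by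
  have hcont : Continuous fun A : Matrix m n 𝕜 => LinearMap.toContinuousLinearMap (toLin' A) :=
    (LinearMap.toContinuousLinearMap.toLinearMap ∘ₗ
      (toLin' : Matrix m n 𝕜 ≃ₗ[𝕜] _).toLinearMap).continuous_of_finiteDimensional
  convert (isOpen_setOfPred_nat_le_rank (Fintype.card n - k)).preimage hcont using 1
  ext A
  have hrank : finrank 𝕜 (LinearMap.range (toLin' A)) + finrank 𝕜 (LinearMap.ker (toLin' A)) =
      Fintype.card n :=
    (toLin' A).finrank_range_add_finrank_ker.trans (finrank_fintype_fun_eq_card 𝕜)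
  show _ ≤ k ↔ ((Fintype.card n - k : ℕ) : Cardinal) ≤ Module.rank 𝕜 (LinearMap.range (toLin' A))
  rw [← finrank_eq_rank, Nat.cast_le]
  omega

theorem isOpen_setOf_finrank_eigenspace_toLin'_le (k : ℕ) :
    IsOpen {q : Matrix n n 𝕜 × 𝕜 | finrank 𝕜 (End.eigenspace (toLin' q.1) q.2) ≤ k} := by
  have hcont : Continuous fun q : Matrix n n 𝕜 × 𝕜 => q.1 - q.2 • (1 : Matrix n n 𝕜) := by
    fun_prop
  convert (isOpen_setOf_finrank_ker_toLin'_le k).preimage hcont using 1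
  ext q
  rw [Set.mem_ofPred_eq, Set.mem_preimage, Set.mem_ofPred_eq, End.eigenspace_def, map_sub,
    map_smul, toLin'_one]
  rfl

end Matrix

def realPoints {m : Type*} (W : Submodule ℂ (m → ℂ)) : Set (Projectivization ℂ (m → ℂ)) :=
  {p | ∃ (v : m → ℝ) (hv : complexify v ≠ 0), complexify v ∈ W ∧
    p = Projectivization.mk ℂ (complexify v) hv}

section realPoints

variable {m : Type*} [Fintype m] {W : Submodule ℂ (m → ℂ)}

lemma subsingleton_realPoints (hW : finrank ℂ W ≤ 1) : (realPoints W).Subsingleton := by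
  rintro _ ⟨v, hv, hvW, rfl⟩ _ ⟨w, hw, hwW, rfl⟩
  exact Projectivization.mk_eq_mk_of_finrank_le_one hW hv hw hvW hwW

lemma le_span_complexify (hW : ∀ x ∈ W, star x ∈ W) :
    W ≤ Submodule.span ℂ (complexify '' {v | complexify v ∈ W}) := by
  have hreal : ∀ x ∈ W, star x = x →
      x ∈ Submodule.span ℂ (complexify '' {v | complexify v ∈ W}) := by
    intro x hxW hx
    obtain ⟨v, rfl⟩ := exists_complexify_eq_of_star_eq hx
    exact Submodule.subset_span ⟨v, hxW, rfl⟩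
  intro x hx
  have hdecomp : x = (2⁻¹ : ℂ) • (x + star x) +
      (-(2⁻¹ : ℂ) * Complex.I) • (Complex.I • (x - star x)) := by
    rw [smul_smul, mul_assoc, Complex.I_mul_I]
    module
  rw [hdecomp]
  refine Submodule.add_mem _ (Submodule.smul_mem _ _ (hreal _ ?_ ?_))
    (Submodule.smul_mem _ _ (hreal _ ?_ ?_))
  · exact W.add_mem hx (hW x hx)
  · rw [star_add, star_star, add_comm]
  · exact W.smul_mem _ (W.sub_mem hx (hW x hx))
  · rw [star_smul, star_sub, star_star, Complex.star_def, Complex.conj_I, neg_smul, ← smul_neg,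
      neg_sub]

lemma exists_linearIndependent_complexify (hW : ∀ x ∈ W, star x ∈ W) (h : ¬ finrank ℂ W ≤ 1) :
    ∃ a b : m → ℝ, complexify a ∈ W ∧ complexify b ∈ W ∧
      LinearIndependent ℂ ![complexify a, complexify b] := by
  by_contra! hdep
  apply h
  obtain ⟨r, hr⟩ : ∃ r : m → ℂ, complexify '' {v | complexify v ∈ W} ⊆ ℂ ∙ r := by
    by_cases hex : ∃ a : m → ℝ, complexify a ∈ W ∧ complexify a ≠ 0
    · obtain ⟨a, haW, ha0⟩ := hex
      refine ⟨complexify a, ?_⟩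
      rintro _ ⟨b, hbW, rfl⟩
      obtain ⟨c, hc⟩ :=
        not_forall_not.mp ((LinearIndependent.pair_iff' ha0).not.mp (hdep a b haW hbW))
      exact Submodule.mem_span_singleton.mpr ⟨c, hc⟩
    · push Not at hex
      refine ⟨0, ?_⟩
      rintro _ ⟨b, hbW, rfl⟩
      rw [hex b hbW]
      exact Submodule.zero_mem _
  calc finrank ℂ W ≤ finrank ℂ (ℂ ∙ r) :=
        Submodule.finrank_mono ((le_span_complexify hW).trans (Submodule.span_le.mpr hr))
    _ ≤ 1 := (finrank_span_le_card {r}).trans (by simp)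

lemma infinite_realPoints (hW : ∀ x ∈ W, star x ∈ W) (h : ¬ finrank ℂ W ≤ 1) :
    (realPoints W).Infinite := by
  obtain ⟨a, b, haW, hbW, hab⟩ := exists_linearIndependent_complexify hW h
  have hinj := (Projectivization.mk_add_smul_injective hab).comp Complex.ofReal_injective
  refine Set.infinite_of_injective_forall_mem hinj fun t =>
    ⟨a + t • b, ?_, ?_, ?_⟩ <;> simp only [complexify_add_smul]
  · exact Projectivization.add_smul_ne_zero_of_linearIndependent hab t
  · exact W.add_mem haW (W.smul_mem _ hbW)
  · rfl

end realPoints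

lemma realProjSet_inter_unitaryRealProjSet (n : ℕ) (g : unitaryGroup (Fin (n + 1)) ℂ) :
    realProjSet n ∩ unitaryRealProjSet n g =
      ⋃ ν, realPoints (End.eigenspace (toLin' ((g : Matrix _ _ ℂ) * (g : Matrix _ _ ℂ)ᵀ)) ν) := by
  ext p
  simp only [Set.mem_inter_iff, Set.mem_iUnion]
  constructor
  · rintro ⟨⟨u, hu, rfl⟩, ⟨w, hw, hp⟩⟩
    obtain ⟨a, ha⟩ := (Projectivization.mk_eq_mk_iff' ℂ _ _ hu hw).mp hp
    obtain ⟨ν, hν⟩ := (exists_smul_mulVec_complexify_eq_iff g.2 hu).mp ⟨w, a, ha⟩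
    exact ⟨ν, u, hu, hν, rfl⟩
  · rintro ⟨ν, u, hu, hν, rfl⟩
    obtain ⟨w, a, ha⟩ := (exists_smul_mulVec_complexify_eq_iff g.2 hu).mpr ⟨ν, hν⟩
    have hw : (g : Matrix (Fin (n + 1)) (Fin (n + 1)) ℂ) *ᵥ complexify w ≠ 0 := by
      rintro h; rw [h, smul_zero] at ha; exact hu ha.symm
    exact ⟨⟨u, hu, rfl⟩, ⟨w, hw, (Projectivization.mk_eq_mk_iff' ℂ _ _ hu hw).mpr ⟨a, ha⟩⟩⟩

lemma finite_iUnion_realPoints_eigenspace_iff {m : Type*} [Fintype m] [DecidableEq m]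
    {S : Matrix m m ℂ} (hS : S ∈ unitaryGroup m ℂ) (hST : Sᵀ = S) :
    (⋃ ν, realPoints (End.eigenspace (toLin' S) ν)).Finite ↔
      ∀ ν ∈ Metric.sphere (0 : ℂ) 1, finrank ℂ (End.eigenspace (toLin' S) ν) ≤ 1 := by
  constructor
  · intro hfin ν _
    by_contra h
    exact infinite_realPoints (fun _ => star_mem_eigenspace_of_transpose_eq hS hST) h
      (hfin.subset (Set.subset_iUnion (fun ν => realPoints (End.eigenspace (toLin' S) ν)) ν))
  · intro h
    refine ((End.finite_hasEigenvalue (toLin' S)).biUnion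
      (t := fun ν => realPoints (End.eigenspace (toLin' S) ν)) fun ν hν => ?_).subset ?_
    · obtain ⟨x, hx, hx0⟩ := hν.exists_hasEigenvector
      rw [End.mem_eigenspace_iff, toLin'_apply] at hx
      have hν1 : ν ∈ Metric.sphere (0 : ℂ) 1 := by
        simpa using norm_eq_one_of_mulVec_eq_smul hS hx hx0
      exact (subsingleton_realPoints (h ν hν1)).finite
    · rintro p ⟨_, ⟨ν, rfl⟩, u, hu, hν, rfl⟩
      exact Set.mem_biUnion (End.hasEigenvalue_of_hasEigenvector ⟨hν, hu⟩) ⟨u, hu, hν, rfl⟩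

theorem isOpen_unitary_intersection_finite_general (n : ℕ) :
    IsOpen {g : Matrix.unitaryGroup (Fin (n + 1)) ℂ |
      (realProjSet n ∩ unitaryRealProjSet n g).Finite} := by
  have hfinite (g : unitaryGroup (Fin (n + 1)) ℂ) :
      (realProjSet n ∩ unitaryRealProjSet n g).Finite ↔ ∀ ν ∈ Metric.sphere (0 : ℂ) 1,
        ((g : Matrix (Fin (n + 1)) (Fin (n + 1)) ℂ) * (g : Matrix _ _ ℂ)ᵀ, ν) ∈
          {q : Matrix (Fin (n + 1)) (Fin (n + 1)) ℂ × ℂ |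
            finrank ℂ (End.eigenspace (toLin' q.1) q.2) ≤ 1} := by
    rw [realProjSet_inter_unitaryRealProjSet]
    exact finite_iUnion_realPoints_eigenspace_iff (mul_transpose_mem_unitaryGroup g.2)
      (by rw [transpose_mul, transpose_transpose])
  simp only [hfinite]
  refine isOpen_iff_mem_nhds.mpr fun g hg =>
    (isCompact_sphere (0 : ℂ) 1).eventually_forall_of_forall_eventually fun ν hν => ?_
  have hcont : Continuous fun q : unitaryGroup (Fin (n + 1)) ℂ × ℂ =>
      ((q.1 : Matrix (Fin (n + 1)) (Fin (n + 1)) ℂ) * (q.1 : Matrix _ _ ℂ)ᵀ, q.2) := by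
    fun_prop
  exact hcont.continuousAt.preimage_mem_nhds
    ((isOpen_setOf_finrank_eigenspace_toLin'_le 1).mem_nhds (hg ν hν))

/-- The set of `g ∈ U(n+1)` for which the intersection `ℝPⁿ ∩ g·ℝPⁿ` is finite
is open in `U(n+1)`. -/
theorem isOpen_unitary_intersection_finite (n : ℕ) (hn : 1 ≤ n) :
    IsOpen {g : Matrix.unitaryGroup (Fin (n + 1)) ℂ |
      (realProjSet n ∩ unitaryRealProjSet n g).Finite} :=
  isOpen_unitary_intersection_finite_general n
end
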